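/- For every real a ≥ 0, every integer n ≥ 1, all reals 0 ≤ α ≤ β and every x ≥ 0, the first central moment of the generalized Baskakov–Kantorovich–Stancu operator is T_{n,a}^{α,β}(t−x;x) = −(β/(n+β))·x + (a/(n+β))·x/(1+x) + (2α+1)/(2(n+β)). -/

import Mathlib

open MeasureTheory Filter

/-- Rising factorial `(n)_i = n(n+1)⋯(n+i−1)`, with `(n)_0 = 1`. -/
noncomputable def risingFac (n i : ℕ) : ℝ := ∏ j ∈ Finset.range i, ((n : ℝ) + j)

/-- `p_k(n,a) = Σ_{i=0}^{k} C(k,i)·(n)_i·a^{k−i}`. -/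
noncomputable def pCoef (n : ℕ) (a : ℝ) (k : ℕ) : ℝ :=
  ∑ i ∈ Finset.range (k + 1), (Nat.choose k i : ℝ) * risingFac n i * a ^ (k - i)

/-- Generalized Baskakov basis function `W_{n,k}^a(x)`. -/
noncomputable def W (n : ℕ) (a : ℝ) (k : ℕ) (x : ℝ) : ℝ :=
  Real.exp (-(a * x) / (1 + x)) * (pCoef n a k / (Nat.factorial k : ℝ)) * x ^ k /
    (1 + x) ^ (k + n)

/-- Stancu-type operator `L_{n,a}^{α,β}(f;x) = Σ_k W_{n,k}^a(x) f((k+α)/(n+β))`. -/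
noncomputable def Lop (n : ℕ) (a α β : ℝ) (f : ℝ → ℝ) (x : ℝ) : ℝ :=
  ∑' k : ℕ, W n a k x * f (((k : ℝ) + α) / ((n : ℝ) + β))

/-- Generalized Baskakov–Kantorovich–Stancu operator `T_{n,a}^{α,β}(f;x)`. -/
noncomputable def TKS (n : ℕ) (a α β : ℝ) (f : ℝ → ℝ) (x : ℝ) : ℝ :=
  ((n : ℝ) + β) *
    ∑' k : ℕ, W n a k x *
      ∫ t in (((k : ℝ) + α) / ((n : ℝ) + β))..(((k : ℝ) + α + 1) / ((n : ℝ) + β)), f t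

/-!
With `u = x / (1 + x)` one has `W_{n,k}^a(x) = e^{-au} (1 - u)^n p_k(n,a) u^k / k!`, and
`∑ₖ p_k(n,a) u^k / k!` is the Cauchy product of the binomial series
`∑ᵢ (n)_i u^i / i! = (1 - u)^{-n}` with `e^{au}`; hence `∑ₖ W_{n,k}^a(x) = 1`.
Pascal's rule gives `p_{k+1}(n,a) = n p_k(n+1,a) + a p_k(n,a)`, i.e.
`(k+1) W_{n,k+1}^a(x) = n x W_{n+1,k}^a(x) + a u W_{n,k}^a(x)`,
so `∑ₖ k W_{n,k}^a(x) = n x + a u`.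
The integral of `t - x` over the `k`-th Stancu interval is `(k + α + 1/2) / (n+β)² - x / (n+β)`,
and the first moment follows from these two sums.
-/

open Finset
open scoped Nat

lemma risingFac_nonneg (n i : ℕ) : 0 ≤ risingFac n i :=
  prod_nonneg fun _ _ => by positivity

lemma risingFac_succ_left (n i : ℕ) : risingFac n (i + 1) = n * risingFac (n + 1) i := by
  simp only [risingFac, prod_range_succ', Nat.cast_add, Nat.cast_one, CharP.cast_eq_zero,
    add_zero, mul_comm (n : ℝ)]
  exact congrArg (· * _) (prod_congr rfl fun j _ => by ring)

lemma risingFac_succ_eq_factorial_mul_choose (m i : ℕ) :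
    risingFac (m + 1) i = i ! * (i + m).choose m := by
  have : risingFac (m + 1) i = ((m + 1).ascFactorial i : ℝ) := by
    simp [risingFac, Nat.ascFactorial_eq_prod_range, add_comm]
  rw [this, Nat.ascFactorial_eq_factorial_mul_choose, add_comm m i, Nat.choose_symm_add]
  push_cast; ring

lemma hasSum_risingFac_div_factorial_mul_pow (n : ℕ) {u : ℝ} (hu : |u| < 1) :
    HasSum (fun i => risingFac n i / i ! * u ^ i) ((1 - u) ^ n)⁻¹ := by
  rcases n with _ | m
  · rw [pow_zero, inv_one]
    refine (hasSum_ite_eq 0 (1 : ℝ)).congr_fun fun i => ?_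
    rcases i with _ | i
    · simp [risingFac]
    · simp [risingFac_succ_left]
  · rw [← one_div]
    refine (hasSum_choose_mul_geometric_of_norm_lt_one m hu).congr_fun fun i => ?_
    rw [risingFac_succ_eq_factorial_mul_choose]
    field_simp

lemma pCoef_div_factorial_mul_pow (n : ℕ) (a u : ℝ) (k : ℕ) :
    pCoef n a k / k ! * u ^ k =
      ∑ i ∈ range (k + 1), risingFac n i / i ! * u ^ i * ((a * u) ^ (k - i) / (k - i)!) := by
  rw [pCoef, sum_div, sum_mul]
  refine sum_congr rfl fun i hi => ?_
  have hik : i ≤ k := Nat.lt_succ_iff.mp (mem_range.mp hi)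
  rw [Nat.cast_choose ℝ hik, mul_pow, ← pow_sub_mul_pow u hik]
  field_simp

lemma hasSum_pCoef_div_factorial_mul_pow (n : ℕ) (a : ℝ) {u : ℝ} (hu : |u| < 1) :
    HasSum (fun k => pCoef n a k / k ! * u ^ k) (Real.exp (a * u) / (1 - u) ^ n) := by
  have hf := hasSum_risingFac_div_factorial_mul_pow n hu
  have hg : HasSum (fun j => (a * u) ^ j / j !) (Real.exp (a * u)) := by
    rw [Real.exp_eq_exp_ℝ]
    exact NormedSpace.expSeries_div_hasSum_exp _
  have hf_norm : Summable fun i => ‖risingFac n i / i ! * u ^ i‖ :=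
    (hasSum_risingFac_div_factorial_mul_pow n (u := |u|) (by rwa [abs_abs])).summable.congr
      fun i => by simp [abs_of_nonneg (risingFac_nonneg n i)]
  have hg_norm : Summable fun j => ‖(a * u) ^ j / (j ! : ℝ)‖ :=
    (Real.summable_pow_div_factorial |a * u|).congr fun j => by simp
  have h := hasSum_sum_range_mul_of_summable_norm hf_norm hg_norm
  rw [hf.tsum_eq, hg.tsum_eq, ← div_eq_inv_mul] at h
  exact h.congr_fun (pCoef_div_factorial_mul_pow n a u)

lemma pCoef_succ (n : ℕ) (a : ℝ) (k : ℕ) :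
    pCoef n a (k + 1) = n * pCoef (n + 1) a k + a * pCoef n a k := by
  have pascal := sum_choose_succ_mul (fun i j => risingFac n i * a ^ j) k
  simp only [← mul_assoc] at pascal
  rw [pCoef, pascal, add_comm, pCoef, pCoef, mul_sum, mul_sum]
  congr 1
  · refine sum_congr rfl fun i _ => ?_
    rw [risingFac_succ_left]; ring
  · refine sum_congr rfl fun i hi => ?_
    rw [Nat.sub_add_comm (Nat.lt_succ_iff.mp (mem_range.mp hi)), pow_succ]; ring

lemma W_eq_pCoef_div_factorial_mul_pow (n : ℕ) (a : ℝ) (k : ℕ) (x : ℝ) :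
    W n a k x = Real.exp (-(a * (x / (1 + x)))) / (1 + x) ^ n *
      (pCoef n a k / k ! * (x / (1 + x)) ^ k) := by
  rw [W, neg_div, mul_div_assoc a, div_pow, pow_add]; ring

lemma hasSum_W (n : ℕ) (a : ℝ) {x : ℝ} (hx : 0 ≤ x) : HasSum (fun k => W n a k x) 1 := by
  have hx1 : 0 < 1 + x := by linarith
  have hu : |x / (1 + x)| < 1 := by
    rw [abs_of_nonneg (by positivity), div_lt_one hx1]; linarith
  have h := ((hasSum_pCoef_div_factorial_mul_pow n a hu).mul_left
    (Real.exp (-(a * (x / (1 + x)))) / (1 + x) ^ n)).congr_fun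
      (W_eq_pCoef_div_factorial_mul_pow n a · x)
  have h1 : 1 - x / (1 + x) = (1 + x)⁻¹ := by field_simp; ring
  rw [h1, Real.exp_neg, inv_pow] at h
  field_simp at h
  exact h

lemma succ_mul_W_succ (n : ℕ) (a : ℝ) (k : ℕ) (x : ℝ) :
    (k + 1) * W n a (k + 1) x = n * x * W (n + 1) a k x + a * (x / (1 + x)) * W n a k x := by
  rw [W, W, W, pCoef_succ, Nat.factorial_succ, pow_succ, show k + 1 + n = k + (n + 1) by ring]
  push_cast
  field_simp
  ring

lemma hasSum_nat_mul_W (n : ℕ) (a : ℝ) {x : ℝ} (hx : 0 ≤ x) :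
    HasSum (fun k => k * W n a k x) (n * x + a * (x / (1 + x))) := by
  rw [← hasSum_nat_add_iff' 1]
  simpa [← succ_mul_W_succ] using ((hasSum_W (n + 1) a hx).mul_left (n * x)).add
    ((hasSum_W n a hx).mul_left (a * (x / (1 + x))))

theorem Top_first_central_moment_general (a : ℝ) (n : ℕ) (α β : ℝ) (x : ℝ) (hx : 0 ≤ x) :
    TKS n a α β (fun t => t - x) x =
      -(β / ((n : ℝ) + β)) * x + (a / ((n : ℝ) + β)) * (x / (1 + x)) +
        (2 * α + 1) / (2 * ((n : ℝ) + β)) := by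
  set N : ℝ := n + β with hN_def
  rcases eq_or_ne N 0 with hN | hN
  · -- both sides are `0`, as division by zero is zero
    simp [TKS, ← hN_def, hN]
  have hI (k : ℕ) : ∫ t in ((k : ℝ) + α) / N..((k : ℝ) + α + 1) / N, (t - x) =
      (k + (α + 1 / 2 - N * x)) / N ^ 2 := by
    rw [intervalIntegral.integral_sub intervalIntegral.intervalIntegrable_id
      intervalIntegrable_const, integral_id, intervalIntegral.integral_const, smul_eq_mul]
    field_simp
    ring
  have hS : HasSum (fun k : ℕ => W n a k x * ((k + (α + 1 / 2 - N * x)) / N ^ 2))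
      ((n * x + a * (x / (1 + x)) + (α + 1 / 2 - N * x) * 1) / N ^ 2) :=
    (((hasSum_nat_mul_W n a hx).add ((hasSum_W n a hx).mul_left _)).div_const _).congr_fun
      fun k => by ring
  rw [TKS, ← hN_def, tsum_congr fun k => by rw [hI k], hS.tsum_eq]
  field_simp
  ring

theorem Top_first_central_moment (a : ℝ) (ha : 0 ≤ a) (n : ℕ) (hn : 1 ≤ n) (α β : ℝ)
    (hα : 0 ≤ α) (hαβ : α ≤ β) (x : ℝ) (hx : 0 ≤ x) :
    TKS n a α β (fun t => t - x) x =
      -(β / ((n : ℝ) + β)) * x + (a / ((n : ℝ) + β)) * (x / (1 + x)) +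
        (2 * α + 1) / (2 * ((n : ℝ) + β)) :=
  Top_first_central_moment_general a n α β x hx
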